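/- Let X be a quantum-Wajsberg algebra and F a deductive system of X. Then the relation ≡_F is an equivalence relation on X (reflexive, symmetric and transitive). -/
import Mathlib


/-- The underlying involutive bounded BE algebra of a quantum-Wajsberg algebra. -/
class PreQW (X : Type*) where
  imp : X → X → X
  zero : X
  one : X
  imp_self : ∀ x : X, imp x x = one
  imp_one : ∀ x : X, imp x one = one
  one_imp : ∀ x : X, imp one x = x
  exchange : ∀ x y z : X, imp x (imp y z) = imp y (imp x z)
  zero_imp : ∀ x : X, imp zero x = one
  involutive : ∀ x : X, imp (imp x zero) zero = x

namespace PreQW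

variable {X : Type*} [PreQW X]

/-- `x* = x → 0`. -/
def qstar (x : X) : X := imp x zero

/-- `x ⊔ y = (x → y) → y`. -/
def qsup (x y : X) : X := imp (imp x y) y

/-- `x ⊓ y = ((x* → y*) → y*)*`. -/
def qinf (x y : X) : X := qstar (imp (imp (qstar x) (qstar y)) (qstar y))

/-- `x ⊙ y = (x → y*)*`. -/
def qprod (x y : X) : X := qstar (imp x (qstar y))

/-- `x ≤ y` iff `x → y = 1`. -/
def qle (x y : X) : Prop := imp x y = one

/-- `x ≤_Q y` iff `x = x ⊓ y`. -/
def qleQ (x y : X) : Prop := x = qinf x y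

/-- `xⁿ = x ⊙ ⋯ ⊙ x` (`n` factors), with `x⁰ = 1`. -/
def qpow (x : X) : ℕ → X
  | 0 => one
  | n + 1 => qprod x (qpow x n)

/-- A filter: nonempty, closed under `⊙`, and `x ∈ F` implies `y → x ∈ F`. -/
def IsFilter (F : Set X) : Prop :=
  F.Nonempty ∧ (∀ x ∈ F, ∀ y ∈ F, qprod x y ∈ F) ∧ (∀ x ∈ F, ∀ y : X, imp y x ∈ F)

/-- A deductive system: contains `1` and is closed under modus ponens. -/
def IsDS (F : Set X) : Prop :=
  (one : X) ∈ F ∧ ∀ x ∈ F, ∀ y : X, imp x y ∈ F → y ∈ F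

/-- A maximal filter: proper and not strictly contained in any proper filter. -/
def IsMaximal (F : Set X) : Prop :=
  IsFilter F ∧ F ≠ Set.univ ∧
    ∀ G : Set X, IsFilter G → F ⊆ G → G ≠ Set.univ → G = F

/-- The strong maximality condition: for every `x ∉ F`, `(xⁿ)* ∈ F` for some `n ≥ 1`. -/
def StrongMaxCond (F : Set X) : Prop :=
  ∀ x : X, x ∉ F → ∃ n : ℕ, 1 ≤ n ∧ qstar (qpow x n) ∈ F

/-- A strongly maximal filter. -/
def IsStronglyMaximal (F : Set X) : Prop :=
  IsFilter F ∧ StrongMaxCond F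

/-- `x ∼ y`: there is `α` with `x ≤ α ≤ x` and `y ≤ α ≤ y`. -/
def Persp (x y : X) : Prop :=
  ∃ α : X, imp x α = one ∧ imp α x = one ∧ imp y α = one ∧ imp α y = one

/-- `x ≡_F y` iff there is `λ` with `x, y ≤_Q λ` and `λ → x, λ → y ∈ F`. -/
def equivF (F : Set X) (x y : X) : Prop :=
  ∃ l : X, qleQ x l ∧ qleQ y l ∧ imp l x ∈ F ∧ imp l y ∈ F

end PreQW

/-- A quantum-Wajsberg algebra: an involutive BE algebra satisfying axiom (QW). -/
class QW (X : Type*) extends PreQW X where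
  qw : ∀ x y z : X,
    imp x (PreQW.qinf (PreQW.qinf x y) (PreQW.qinf z x)) =
      PreQW.qinf (imp x y) (imp x z)

open PreQW
section QWProofs

open PreQW

variable {X : Type*} [QW X]

private lemma qw_star_star (x : X) : qstar (qstar x) = x := involutive x

private lemma qw_contra (x y : X) : imp x y = imp (qstar y) (qstar x) := by
  conv_lhs => rw [← involutive y]
  exact exchange x (imp y zero) zero

private lemma qw_contra' (x y : X) : imp x (qstar y) = imp y (qstar x) := by
  rw [qw_contra x (qstar y), qw_star_star]

private lemma qw_star_one : qstar (one : X) = zero := one_imp zero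

private lemma qw_star_zero : qstar (zero : X) = one := zero_imp zero

private lemma qw_qinf_zero (x : X) : qinf x (zero : X) = zero := by
  show qstar (imp (imp (qstar x) (qstar (zero:X))) (qstar (zero:X))) = zero
  rw [qw_star_zero, PreQW.imp_one (qstar x), PreQW.one_imp (one : X), qw_star_one]

private lemma qw_zero_qinf (x : X) : qinf (zero : X) x = zero := by
  show qstar (imp (imp (qstar (zero:X)) (qstar x)) (qstar x)) = zero
  rw [qw_star_zero, PreQW.one_imp (qstar x), PreQW.imp_self (qstar x), qw_star_one]

/-- Master lemma from axiom (QW) at `y = 0`:  `x* ⊓ (x → z) = x*`. -/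
private lemma qw_M0 (x z : X) : qinf (qstar x) (imp x z) = qstar x := by
  have h := QW.qw x zero z
  rw [qw_qinf_zero x, qw_zero_qinf (qinf z x)] at h
  exact h.symm

private lemma qw_M (x z : X) : qinf x (imp (qstar x) z) = x := by
  have h := qw_M0 (qstar x) z
  rwa [qw_star_star] at h

private lemma qw_P1 (x w v : X) : qinf x (imp w (imp v x)) = x := by
  rw [qw_contra v x, exchange w (qstar x) (qstar v)]
  exact qw_M x (imp w (qstar v))

private lemma qw_qinf_eq (p q : X) : qinf p q = qstar (imp q (qstar (imp q p))) := by
  show qstar (imp (imp (qstar p) (qstar q)) (qstar q)) = _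
  rw [← qw_contra q p]
  rw [show imp (imp q p) (qstar q) = imp q (qstar (imp q p)) from exchange (imp q p) q zero]

private lemma qw_hyp_star {x l : X} (h : x = qinf x l) :
    qstar x = imp (imp l x) (qstar l) := by
  have h2 := congrArg qstar h
  rw [show qinf x l = qstar (imp (imp (qstar x) (qstar l)) (qstar l)) from rfl,
    ← qw_contra l x, qw_star_star] at h2
  exact h2

/-- If `x ≤_Q l` then `(l → x) → x = l`. -/
private lemma qw_lemA {x l : X} (h : x = qinf x l) : imp (imp l x) x = l := by
  have hs : qstar x = imp (imp l x) (qstar l) := qw_hyp_star h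
  calc imp (imp l x) x
      = imp (qstar x) (qstar (imp l x)) := qw_contra _ _
    _ = imp (imp (imp l x) (qstar l)) (qstar (imp l x)) := by rw [hs]
    _ = imp (imp l x) (qstar (imp (imp l x) (qstar l))) := qw_contra' _ _
    _ = qstar (qinf (qstar l) (imp l x)) := by rw [qw_qinf_eq (qstar l) (imp l x), qw_star_star]
    _ = qstar (qstar l) := by rw [qw_M0 l x]
    _ = l := qw_star_star l

/-- If `z ≤_Q m` then `(m → z) → (w → z) = w → m`. -/
private lemma qw_lemB {z m : X} (h : z = qinf z m) (w : X) :
    imp (imp m z) (imp w z) = imp w m := by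
  have hs : qstar z = imp (imp m z) (qstar m) := qw_hyp_star h
  calc imp (imp m z) (imp w z)
      = imp (imp m z) (imp (qstar z) (qstar w)) := by rw [← qw_contra w z]
    _ = imp (imp m z) (imp (imp (imp m z) (qstar m)) (qstar w)) := by rw [hs]
    _ = imp (imp m z) (imp w (qstar (imp (imp m z) (qstar m)))) := by
        rw [qw_contra' (imp (imp m z) (qstar m)) w]
    _ = imp w (imp (imp m z) (qstar (imp (imp m z) (qstar m)))) := exchange _ _ _
    _ = imp w (qstar (qinf (qstar m) (imp m z))) := by
        rw [qw_qinf_eq (qstar m) (imp m z), qw_star_star]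
    _ = imp w (qstar (qstar m)) := by rw [qw_M0 m z]
    _ = imp w m := by rw [qw_star_star]

private lemma qw_qinf_self (x : X) : qinf x x = x := by
  show qstar (imp (imp (qstar x) (qstar x)) (qstar x)) = x
  rw [PreQW.imp_self (qstar x), PreQW.one_imp (qstar x)]
  exact qw_star_star x

end QWProofs

/-- Proposition 4.5: `≡_F` is an equivalence relation. -/
theorem qw_prop_4_5 {X : Type*} [QW X] (F : Set X) (hF : IsDS F) :
    Equivalence (equivF F) := by
  obtain ⟨hone, hmp⟩ := hF
  constructor
  · intro x
    exact ⟨x, (qw_qinf_self x).symm, (qw_qinf_self x).symm,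
      by rw [PreQW.imp_self x]; exact hone, by rw [PreQW.imp_self x]; exact hone⟩
  · rintro x y ⟨l, hxl, hyl, ha, hb⟩
    exact ⟨l, hyl, hxl, hb, ha⟩
  · rintro x y z ⟨l, hxl, hyl, ha, hb⟩ ⟨m, hym, hzm, hc, hd⟩
    refine ⟨imp (imp l y) m, ?_, ?_, ?_, ?_⟩
    · -- x ≤_Q ν
      have hnu : imp (imp m y) l = imp (imp l y) m := by
        have h := qw_lemB hym (imp l y)
        rwa [qw_lemA hyl] at h
      have h := qw_P1 x (imp m y) (imp l x)
      rw [qw_lemA hxl, hnu] at h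
      exact h.symm
    · -- z ≤_Q ν
      have h := qw_P1 z (imp l y) (imp m z)
      rw [qw_lemA hzm] at h
      exact h.symm
    · -- ν → x ∈ F
      have hnu : imp (imp m y) l = imp (imp l y) m := by
        have h := qw_lemB hym (imp l y)
        rwa [qw_lemA hyl] at h
      have h1 : imp (imp m y) (imp (imp (imp l y) m) l) = one := by
        rw [← hnu, exchange]
        exact imp_self _
      have hnl : imp (imp (imp l y) m) l ∈ F :=
        hmp _ hc _ (by rw [h1]; exact hone)
      exact hmp _ ha _ (by rw [qw_lemB hxl (imp (imp l y) m)]; exact hnl)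
    · -- ν → z ∈ F
      have h2 : imp (imp l y) (imp (imp (imp l y) m) m) = one := by
        rw [exchange]
        exact imp_self _
      have hnm : imp (imp (imp l y) m) m ∈ F :=
        hmp _ hb _ (by rw [h2]; exact hone)
      exact hmp _ hd _ (by rw [qw_lemB hzm (imp (imp l y) m)]; exact hnm)
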